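/- arXiv:1310.4336 — 2 statements merged into one kernel-verified Lean document; each statement's English description precedes it below -/
import Mathlib

section
/- If g : ℂ → ℝ satisfies g(z) = -log|z|² + h(z) near 0 with h continuous at 0, and f is C¹ near 0, then lim_{r→0⁺} [ (1/2π) ∫₀^{2π} g(r e^{iθ}) · r · (∂f/∂r)(r e^{iθ}) dθ - (1/2π) ∫₀^{2π} f(r e^{iθ}) · r · (∂g/∂r)(r e^{iθ}) dθ ] = 2 f(0), where ∂/∂r denotes the radial derivative. -/
open Filter Topology Real

/-! On the circle of radius `r`, `r · g = -2 r log r + r h → 0` and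
`r · ∂g/∂r = -2 + r · ∂h/∂r → -2`, while `f → f 0` and `∂f/∂r` stays bounded. So both integrands
converge as `r → 0⁺` uniformly in `θ` (convergence along `𝓝[>] 0 ×ˢ ⊤`), to `0` and `-2 f 0`,
and uniform convergence passes under the integral. -/

open Complex in
theorem norm_ofReal_mul_exp_ofReal_mul_I (r θ : ℝ) : ‖(r : ℂ) * exp (θ * I)‖ = |r| := by
  rw [norm_mul, norm_exp_ofReal_mul_I, mul_one, norm_real, Real.norm_eq_abs]

open Complex in
theorem tendsto_ofReal_mul_exp_ofReal_mul_I_nhds_zero_prod_top :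
    Tendsto (fun p : ℝ × ℝ => (p.1 : ℂ) * exp (p.2 * I)) (𝓝 0 ×ˢ ⊤) (𝓝 0) := by
  refine squeeze_zero_norm (fun p => (norm_ofReal_mul_exp_ofReal_mul_I p.1 p.2).le) ?_
  simpa using (tendsto_fst (f := 𝓝 (0 : ℝ)) (g := ⊤)).abs

open Complex in
theorem ofReal_mul_exp_ofReal_mul_I_ne_zero {r : ℝ} (hr : r ≠ 0) (θ : ℝ) :
    (r : ℂ) * exp (θ * I) ≠ 0 := by
  rw [← norm_pos_iff, norm_ofReal_mul_exp_ofReal_mul_I, abs_pos]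
  exact hr

theorem eventually_nhdsGT_zero_prod_top {P : ℝ × ℝ → Prop} {ρ : ℝ} (hρ : 0 < ρ)
    (h : ∀ p : ℝ × ℝ, 0 < p.1 → p.1 < ρ → P p) : ∀ᶠ p in 𝓝[>] 0 ×ˢ ⊤, P p :=
  ((eventually_mem_set.2 (Ioo_mem_nhdsGT hρ)).prod_inl ⊤).mono fun p hp => h p hp.1 hp.2

theorem tendsto_nhdsGT_zero_prod_top_of_forall_abs_lt {u : ℝ → ℝ → ℝ}
    (h : ∀ δ : ℝ, 0 < δ → ∃ ρ > 0, ∀ r θ : ℝ, 0 < r → r < ρ → |u r θ| < δ) :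
    Tendsto (fun p : ℝ × ℝ => u p.1 p.2) (𝓝[>] 0 ×ˢ ⊤) (𝓝 0) :=
  Metric.tendsto_nhds.2 fun δ hδ => by
    obtain ⟨ρ, hρ, hsmall⟩ := h δ hδ
    exact eventually_nhdsGT_zero_prod_top hρ fun p hp hpρ => by
      simpa using hsmall p.1 p.2 hp hpρ

theorem tendsto_intervalIntegral_of_tendsto_prod_top {ι E : Type*} [NormedAddCommGroup E]
    [NormedSpace ℝ E] [CompleteSpace E] {l : Filter ι} [l.IsCountablyGenerated] {F : ι → ℝ → E}
    {c : E} {a b : ℝ}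
    (hF : ∀ᶠ i in l, Continuous (F i)) (h : Tendsto ↿F (l ×ˢ ⊤) (𝓝 c)) :
    Tendsto (fun i => ∫ x in a..b, F i x) l (𝓝 ((b - a) • c)) := by
  have := (tendsto_prod_top_iff.1 h).tendstoUniformlyOn.tendsto_intervalIntegral_of_continuousOn
    (μ := MeasureTheory.volume) (a := a) (b := b) (hF.mono fun _ hi => hi.continuousOn)
  rwa [intervalIntegral.integral_const] at this

theorem tendsto_circle_average_of_tendsto_prod_top {ι : Type*} {l : Filter ι}
    [l.IsCountablyGenerated] {F : ι → ℝ → ℝ} {c : ℝ}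
    (hF : ∀ᶠ i in l, Continuous (F i)) (h : Tendsto ↿F (l ×ˢ ⊤) (𝓝 c)) :
    Tendsto (fun i => 1 / (2 * π) * ∫ θ in (0 : ℝ)..2 * π, F i θ) l (𝓝 c) := by
  have := (tendsto_intervalIntegral_of_tendsto_prod_top (a := 0) (b := 2 * π) hF h).const_mul
    (1 / (2 * π))
  rwa [smul_eq_mul, sub_zero, ← mul_assoc, one_div_mul_cancel (by positivity), one_mul] at this

open Complex in
theorem tendsto_fst_mul_log_singular {g h : ℂ → ℝ} {ε : ℝ} (hε : 0 < ε)
    (hg : ∀ z : ℂ, z ≠ 0 → ‖z‖ < ε → g z = -Real.log (‖z‖ ^ 2) + h z)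
    (hh : ContinuousAt h 0) :
    Tendsto (fun p : ℝ × ℝ => p.1 * g (p.1 * exp (p.2 * I))) (𝓝[>] 0 ×ˢ ⊤) (𝓝 0) := by
  have hz : Tendsto (fun p : ℝ × ℝ => (p.1 : ℂ) * exp (p.2 * I)) (𝓝[>] 0 ×ˢ ⊤) (𝓝 0) :=
    tendsto_ofReal_mul_exp_ofReal_mul_I_nhds_zero_prod_top.mono_left
      (prod_mono_left ⊤ nhdsWithin_le_nhds)
  have hfst : Tendsto (fun p : ℝ × ℝ => p.1) (𝓝[>] 0 ×ˢ ⊤) (𝓝 0) :=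
    tendsto_fst.mono_right nhdsWithin_le_nhds
  have hmul_log : Tendsto (fun p : ℝ × ℝ => p.1 * Real.log p.1) (𝓝[>] 0 ×ˢ ⊤) (𝓝 0) := by
    simpa [Function.comp_def] using (continuous_mul_log.tendsto 0).comp hfst
  have hlim := (hmul_log.const_mul 2).neg.add (hfst.mul (hh.tendsto.comp hz))
  rw [mul_zero, neg_zero, zero_mul, zero_add] at hlim
  refine hlim.congr' (eventually_nhdsGT_zero_prod_top hε fun ⟨r, θ⟩ hr hrε => ?_)
  dsimp only [Function.comp_apply] at hr hrε ⊢
  have hnorm := norm_ofReal_mul_exp_ofReal_mul_I r θ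
  rw [abs_of_pos hr] at hnorm
  rw [hg _ (norm_pos_iff.1 (by rwa [hnorm])) (by rwa [hnorm]), hnorm, Real.log_pow]
  push_cast
  ring

open Complex in
theorem tendsto_log_singular_mul_bounded {g h : ℂ → ℝ} {u : ℝ → ℝ → ℝ} {ε M : ℝ} (hε : 0 < ε)
    (hg : ∀ z : ℂ, z ≠ 0 → ‖z‖ < ε → g z = -Real.log (‖z‖ ^ 2) + h z)
    (hh : ContinuousAt h 0) (hu : ∀ r θ : ℝ, 0 < r → r < ε → |u r θ| ≤ M) :
    Tendsto (fun p : ℝ × ℝ => g (p.1 * exp (p.2 * I)) * (p.1 * u p.1 p.2))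
      (𝓝[>] 0 ×ˢ ⊤) (𝓝 0) := by
  have hbdd : IsBoundedUnder (· ≤ ·) (𝓝[>] 0 ×ˢ ⊤) fun p : ℝ × ℝ => ‖u p.1 p.2‖ :=
    isBoundedUnder_of_eventually_le (eventually_nhdsGT_zero_prod_top hε fun p => hu p.1 p.2)
  refine ((tendsto_fst_mul_log_singular hε hg hh).zero_mul_isBoundedUnder_le hbdd).congr
    fun p => ?_
  ring

theorem tendsto_fst_mul_of_eq_neg_two_div_add {dg dh : ℝ → ℝ → ℝ} {ε : ℝ} (hε : 0 < ε)
    (hdg : ∀ r θ : ℝ, 0 < r → r < ε → dg r θ = -2 / r + dh r θ)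
    (hdh : Tendsto (fun p : ℝ × ℝ => p.1 * dh p.1 p.2) (𝓝[>] 0 ×ˢ ⊤) (𝓝 0)) :
    Tendsto (fun p : ℝ × ℝ => p.1 * dg p.1 p.2) (𝓝[>] 0 ×ˢ ⊤) (𝓝 (-2)) := by
  have hlim := (tendsto_const_nhds (x := (-2 : ℝ))).add hdh
  rw [add_zero] at hlim
  refine hlim.congr' (eventually_nhdsGT_zero_prod_top hε fun ⟨r, θ⟩ hr hrε => ?_)
  dsimp only at hr hrε ⊢
  rw [hdg r θ hr hrε, mul_add, mul_div_cancel₀ _ hr.ne']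

theorem log_singular_boundary_limit_general
    (f g h : ℂ → ℝ) (df dg dh : ℝ → ℝ → ℝ) (ε M : ℝ) (hε : 0 < ε)
    -- `g(z) = -log|z|² + h(z)` near `0`
    (hg : ∀ z : ℂ, z ≠ 0 → ‖z‖ < ε →
      g z = -Real.log (‖z‖ ^ 2) + h z)
    (hh : ContinuousAt h 0)
    -- radial derivative of `g` is `-2/r` plus that of `h`
    (hdg : ∀ r θ : ℝ, 0 < r → r < ε → dg r θ = -2 / r + dh r θ)
    -- `r ∂h/∂r → 0` uniformly in `θ`
    (hdh : ∀ δ : ℝ, 0 < δ → ∃ ρ > 0, ∀ r θ : ℝ, 0 < r → r < ρ → |r * dh r θ| < δ)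
    -- `f` is C¹ near `0`: continuous at `0` with bounded radial derivative
    (hf : ContinuousAt f 0)
    (hfc : Continuous f)
    (hdf : ∀ r θ : ℝ, 0 < r → r < ε → |df r θ| ≤ M)
    -- integrability in the angular variable
    (hcont : ∀ r : ℝ, 0 < r → r < ε →
      (Continuous fun θ => df r θ) ∧ Continuous fun θ => dg r θ)
    (hgc : ContinuousOn g {z : ℂ | z ≠ 0}) :
    Tendsto (fun r : ℝ =>
        (1 / (2 * π)) * ∫ θ in (0:ℝ)..(2 * π),
            g (r * Complex.exp (θ * Complex.I)) * (r * df r θ) -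
        (1 / (2 * π)) * ∫ θ in (0:ℝ)..(2 * π),
            f (r * Complex.exp (θ * Complex.I)) * (r * dg r θ))
      (𝓝[>] 0) (𝓝 (2 * f 0)) := by
  have hcurve : ∀ r : ℝ, Continuous fun θ : ℝ => (r : ℂ) * Complex.exp (θ * Complex.I) :=
    fun r => by fun_prop
  have hF : ∀ᶠ r : ℝ in 𝓝[>] 0,
      (Continuous fun θ : ℝ => g (r * Complex.exp (θ * Complex.I)) * (r * df r θ)) ∧
      Continuous fun θ : ℝ => f (r * Complex.exp (θ * Complex.I)) * (r * dg r θ) := by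
    filter_upwards [Ioo_mem_nhdsGT hε] with r ⟨hr, hrε⟩
    obtain ⟨hdfc, hdgc⟩ := hcont r hr hrε
    exact ⟨(hgc.comp_continuous (hcurve r) (ofReal_mul_exp_ofReal_mul_I_ne_zero hr.ne')).mul
        (continuous_const.mul hdfc),
      (hfc.comp (hcurve r)).mul (continuous_const.mul hdgc)⟩
  have h₁ := tendsto_circle_average_of_tendsto_prod_top
    (F := fun (r θ : ℝ) => g (r * Complex.exp (θ * Complex.I)) * (r * df r θ))
    (hF.mono fun _ => And.left) (tendsto_log_singular_mul_bounded hε hg hh hdf)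
  have h₂ := tendsto_circle_average_of_tendsto_prod_top
    (F := fun (r θ : ℝ) => f (r * Complex.exp (θ * Complex.I)) * (r * dg r θ))
    (hF.mono fun _ => And.right)
    ((hf.tendsto.comp (tendsto_ofReal_mul_exp_ofReal_mul_I_nhds_zero_prod_top.mono_left
      (prod_mono_left ⊤ nhdsWithin_le_nhds))).mul (tendsto_fst_mul_of_eq_neg_two_div_add hε hdg
        (tendsto_nhdsGT_zero_prod_top_of_forall_abs_lt hdh)))
  convert (h₁.sub h₂).congr' ?_ using 2
  · ring
  -- The first `∫` binder extends to the end of the statement: the second average is a constant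
  -- inside it.
  filter_upwards [hF] with r hFr
  rw [intervalIntegral.integral_sub (hFr.1.intervalIntegrable _ _) intervalIntegrable_const,
    intervalIntegral.integral_const, smul_eq_mul, sub_zero, ← mul_assoc (2 * π),
    mul_one_div_cancel (by positivity), one_mul, mul_sub]

/-- Boundary computation at `∂U_r(w)` in Lemma 2.3: if `g = -log|z|² + h` near `0`
with `h` continuous at `0`, whose radial-derivative contribution `r·∂h/∂r` tends to `0`
uniformly in `θ`, and `f` is `C¹` near `0` (continuous with bounded radial derivative
`df`), then
`(1/2π)∫ g·r·∂f/∂r dθ - (1/2π)∫ f·r·∂g/∂r dθ → 2 f(0)` as `r → 0⁺`.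
Here `df dg dh : ℝ → ℝ → ℝ` denote the radial derivatives in polar coordinates. -/
theorem log_singular_boundary_limit
    (f g h : ℂ → ℝ) (df dg dh : ℝ → ℝ → ℝ) (ε M : ℝ) (hε : 0 < ε)
    -- `g(z) = -log|z|² + h(z)` near `0`
    (hg : ∀ z : ℂ, z ≠ 0 → ‖z‖ < ε →
      g z = -Real.log (‖z‖ ^ 2) + h z)
    (hh : ContinuousAt h 0)
    -- radial derivative of `g` is `-2/r` plus that of `h`
    (hdg : ∀ r θ : ℝ, 0 < r → r < ε → dg r θ = -2 / r + dh r θ)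
    -- `r ∂h/∂r → 0` uniformly in `θ`
    (hdh : ∀ δ : ℝ, 0 < δ → ∃ ρ > 0, ∀ r θ : ℝ, 0 < r → r < ρ → |r * dh r θ| < δ)
    -- `f` is C¹ near `0`: continuous at `0` with bounded radial derivative
    (hf : ContinuousAt f 0)
    (hfc : Continuous f)
    (hdf : ∀ r θ : ℝ, 0 < r → r < ε → |df r θ| ≤ M)
    -- the radial derivatives are genuine derivatives along rays
    (hdf' : ∀ r θ : ℝ, 0 < r → r < ε →
      HasDerivAt (fun t : ℝ => f (t * Complex.exp (θ * Complex.I))) (df r θ) r)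
    (hdg' : ∀ r θ : ℝ, 0 < r → r < ε →
      HasDerivAt (fun t : ℝ => g (t * Complex.exp (θ * Complex.I))) (dg r θ) r)
    -- integrability in the angular variable
    (hcont : ∀ r : ℝ, 0 < r → r < ε →
      (Continuous fun θ => df r θ) ∧ Continuous fun θ => dg r θ)
    (hgc : ContinuousOn g {z : ℂ | z ≠ 0}) :
    Tendsto (fun r : ℝ =>
        (1 / (2 * π)) * ∫ θ in (0:ℝ)..(2 * π),
            g (r * Complex.exp (θ * Complex.I)) * (r * df r θ) -
        (1 / (2 * π)) * ∫ θ in (0:ℝ)..(2 * π),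
            f (r * Complex.exp (θ * Complex.I)) * (r * dg r θ))
      (𝓝[>] 0) (𝓝 (2 * f 0)) :=
  log_singular_boundary_limit_general f g h df dg dh ε M hε hg hh hdg hdh hf hfc hdf hcont hgc
end

section
/- For s ∈ ℂ with Re(s) > 1 and u > 0, let g_{ℍ,s}(u) = Γ(s)²/Γ(2s) · u^{-s} · F(s,s;2s;-1/u); then g_{ℍ,s}(u) + log u remains bounded as u → 0⁺ for fixed s with Re(s) > 1. -/
open Filter Topology Real MeasureTheory intervalIntegral

/-- The free-space Green's function `g_{ℍ,s}(u) = (Γ(s)²/Γ(2s)) u^{-s} F(s,s;2s;-1/u)`,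
expressed for `Re s > 1` and `u > 0` via Euler's integral representation of the Gauss
hypergeometric function:
`(Γ(s)²/Γ(2s)) u^{-s} F(s,s;2s;-1/u) = ∫₀¹ (t(1-t))^{s-1} (u+t)^{-s} dt`. -/
noncomputable def freeGreen (s : ℂ) (u : ℝ) : ℂ :=
  ∫ t in (0:ℝ)..1, ((t : ℂ) * (1 - (t : ℂ))) ^ (s - 1) * ((u : ℂ) + (t : ℂ)) ^ (-s)

noncomputable def gR (s : ℂ) : ℝ := max (1/2) (Real.exp (-(‖s-1‖ + 1)⁻¹))

noncomputable def gK (s : ℂ) : ℝ := 4 * (‖s-1‖ + 1) + 2 / (1 - gR s)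

lemma gR_lt_one (s : ℂ) : gR s < 1 := by
  have hc : 0 < ‖s-1‖ + 1 := by positivity
  have h2 : Real.exp (-(‖s-1‖ + 1)⁻¹) < 1 := by
    rw [Real.exp_lt_one_iff]
    simp only [neg_lt_zero]
    positivity
  exact max_lt (by norm_num) h2

lemma gR_half (s : ℂ) : (1/2 : ℝ) ≤ gR s := le_max_left _ _

lemma gK_pos (s : ℂ) : 0 < gK s := by
  have h1 := gR_lt_one s
  have : (0:ℝ) < 2 / (1 - gR s) := div_pos two_pos (by linarith)
  have : (0:ℝ) < 4 * (‖s-1‖ + 1) := by positivity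
  unfold gK; linarith

lemma key_ineq (s : ℂ) (hs : 1 ≤ s.re) {r : ℝ} (hr0 : 0 < r) (hr1 : r ≤ 1) :
    ‖(r:ℂ) ^ (s-1) - 1‖ ≤ gK s * (1 - r) := by
  set c : ℝ := ‖s-1‖ + 1 with hc
  have hc0 : 0 < c := by positivity
  have hr01 : gR s < 1 := gR_lt_one s
  have hKsplit : gK s = 4 * c + 2 / (1 - gR s) := rfl
  have hterm2 : 0 < 2 / (1 - gR s) := div_pos two_pos (by linarith)
  rcases le_or_gt (gR s) r with h | h
  · -- r ≥ gR s : use exp estimate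
    have hrhalf : (1/2:ℝ) ≤ r := le_trans (gR_half s) h
    have hlogr : Real.log r ≤ 0 := Real.log_nonpos hr0.le hr1
    have hlow : -c⁻¹ ≤ Real.log r := by
      calc -c⁻¹ = Real.log (Real.exp (-c⁻¹)) := (Real.log_exp _).symm
        _ ≤ Real.log r := Real.log_le_log (Real.exp_pos _) (le_trans (le_max_right _ _) h)
    have habs_log : |Real.log r| ≤ c⁻¹ := by
      rw [abs_of_nonpos hlogr]; linarith
    have hrne : (r:ℂ) ≠ 0 := by exact_mod_cast hr0.ne'
    have hcp : (r:ℂ) ^ (s-1) = Complex.exp ((Real.log r : ℂ) * (s-1)) := by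
      rw [Complex.cpow_def_of_ne_zero hrne, Complex.ofReal_log hr0.le]
    have hzabs : ‖(Real.log r : ℂ) * (s-1)‖ = |Real.log r| * ‖s-1‖ := by
      rw [norm_mul, Complex.norm_real, Real.norm_eq_abs]
    have hz1 : ‖(Real.log r : ℂ) * (s-1)‖ ≤ 1 := by
      rw [hzabs]
      calc |Real.log r| * ‖s-1‖ ≤ c⁻¹ * c :=
            mul_le_mul habs_log (by rw [hc]; linarith) (norm_nonneg _) (by positivity)
        _ = 1 := inv_mul_cancel₀ hc0.ne'
    have h1 := Complex.norm_exp_sub_one_le hz1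
    rw [hcp]
    have hrinv : r⁻¹ ≤ 2 := by
      have := inv_anti₀ (by norm_num : (0:ℝ) < 1/2) hrhalf
      simpa using this
    have hlog2 : |Real.log r| ≤ 2 * (1 - r) := by
      rw [abs_of_nonpos hlogr]
      have h2 := Real.log_le_sub_one_of_pos (show (0:ℝ) < r⁻¹ by positivity)
      rw [Real.log_inv] at h2
      have e : r⁻¹ - 1 = (1-r) * r⁻¹ := by field_simp
      have h3 : (1-r) * r⁻¹ ≤ (1-r) * 2 := mul_le_mul_of_nonneg_left hrinv (by linarith)
      linarith
    calc ‖Complex.exp ((Real.log r : ℂ) * (s-1)) - 1‖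
        ≤ 2 * ‖(Real.log r : ℂ) * (s-1)‖ := h1
      _ = 2 * (|Real.log r| * ‖s-1‖) := by rw [hzabs]
      _ ≤ 2 * ((2 * (1-r)) * c) := by
          apply mul_le_mul_of_nonneg_left _ (by norm_num)
          apply mul_le_mul hlog2 (by rw [hc]; linarith) (norm_nonneg _) (by linarith)
      _ = 4 * c * (1 - r) := by ring
      _ ≤ gK s * (1 - r) := by
          rw [hKsplit]
          have : 0 ≤ 1 - r := by linarith
          nlinarith
  · -- r < gR s : crude bound
    have hre : 0 ≤ (s-1).re := by simp [Complex.sub_re]; linarith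
    have habs : ‖(r:ℂ) ^ (s-1)‖ ≤ 1 := by
      rw [Complex.norm_cpow_eq_rpow_re_of_pos hr0]
      exact Real.rpow_le_one hr0.le hr1 hre
    have h2 : ‖(r:ℂ) ^ (s-1) - 1‖ ≤ 2 := by
      calc ‖(r:ℂ) ^ (s-1) - 1‖ ≤ ‖(r:ℂ)^(s-1)‖ + ‖(1:ℂ)‖ :=
            (norm_sub_le _ _)
        _ ≤ 2 := by rw [norm_one]; linarith
    have h3 : 2 ≤ 2 / (1 - gR s) * (1 - r) := by
      rw [div_mul_eq_mul_div, le_div_iff₀ (by linarith : (0:ℝ) < 1 - gR s)]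
      nlinarith
    have h4 : 0 ≤ 4 * c * (1 - r) := by nlinarith
    calc ‖(r:ℂ) ^ (s-1) - 1‖ ≤ 2 := h2
      _ ≤ 2 / (1 - gR s) * (1 - r) := h3
      _ ≤ gK s * (1 - r) := by rw [hKsplit]; nlinarith

/-- Logarithmic singularity of the free-space Green's function: for fixed `s` with
`Re s > 1`, `g_{ℍ,s}(u) + log u` remains bounded as `u → 0⁺`. -/
theorem freeGreen_log_singularity (s : ℂ) (hs : 1 < s.re) :
    ∃ C ε : ℝ, 0 < ε ∧ ∀ u : ℝ, 0 < u → u < ε →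
      ‖freeGreen s u + Real.log u‖ ≤ C := by
  refine ⟨2 * gK s + Real.log 2, 1, one_pos, fun u hu hu1 => ?_⟩
  have hK : 0 < gK s := gK_pos s
  set A : ℝ → ℂ := fun t => ((t : ℂ) * (1 - (t : ℂ))) ^ (s - 1) * ((u : ℂ) + (t : ℂ)) ^ (-s)
    with hAdef
  set B : ℝ → ℂ := fun t => (((u + t)⁻¹ : ℝ) : ℂ) with hBdef
  have hIoc : Set.uIoc (0:ℝ) 1 = Set.Ioc 0 1 := Set.uIoc_of_le zero_le_one
  have hIcc : Set.uIcc (0:ℝ) 1 = Set.Icc 0 1 := Set.uIcc_of_le zero_le_one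
  -- positivity of u+t on [0,1]
  have hbpos : ∀ t : ℝ, 0 ≤ t → 0 < u + t := fun t ht => by linarith
  -- integrability of A
  have intA : IntervalIntegrable A volume 0 1 := by
    have hbeta : IntervalIntegrable
        (fun x : ℝ => (x : ℂ) ^ (s - 1) * (1 - (x : ℂ)) ^ (s - 1)) volume 0 1 :=
      Complex.betaIntegral_convergent (by linarith) (by linarith)
    have contg : ContinuousOn (fun t : ℝ => ((u:ℂ) + (t:ℂ)) ^ (-s)) (Set.uIcc 0 1) := by
      intro t ht
      rw [hIcc] at ht
      apply ContinuousAt.continuousWithinAt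
      have h1 : ContinuousAt (fun t : ℝ => (u:ℂ) + (t:ℂ)) t :=
        (continuous_const.add Complex.continuous_ofReal).continuousAt
      have h2 : ContinuousAt (fun z : ℂ => z ^ (-s)) ((u:ℂ) + (t:ℂ)) := by
        apply continuousAt_cpow_const
        left
        simp only [Complex.add_re, Complex.ofReal_re]
        exact hbpos t ht.1
      exact ContinuousAt.comp (x := t) h2 h1
    have h0 := hbeta.mul_continuousOn contg
    refine h0.congr ?_
    intro t ht
    rw [hIoc] at ht
    have h1 : ((t:ℂ) * (1 - (t:ℂ))) ^ (s-1) = (t:ℂ) ^ (s-1) * (1 - (t:ℂ)) ^ (s-1) := by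
      have e1 : (1 - (t:ℂ)) = ((1 - t : ℝ) : ℂ) := by push_cast; ring
      rw [e1, Complex.mul_cpow_ofReal_nonneg ht.1.le (by linarith [ht.2] : (0:ℝ) ≤ 1 - t)]
    simp only [A, h1]
  -- integrability of B
  have contB : ContinuousOn B (Set.uIcc 0 1) := by
    apply Complex.continuous_ofReal.comp_continuousOn
    apply ContinuousOn.inv₀ (continuous_const.add continuous_id).continuousOn
    intro t ht
    rw [hIcc] at ht
    exact (hbpos t ht.1).ne'
  have intB : IntervalIntegrable B volume 0 1 := contB.intervalIntegrable
  -- value of ∫ B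
  have contBR : ContinuousOn (fun t : ℝ => (u + t)⁻¹) (Set.uIcc 0 1) := by
    apply ContinuousOn.inv₀ (continuous_const.add continuous_id).continuousOn
    intro t ht
    rw [hIcc] at ht
    exact (hbpos t ht.1).ne'
  have hintB : ∫ t in (0:ℝ)..1, B t = ((Real.log (u+1) - Real.log u : ℝ) : ℂ) := by
    have h1 : ∫ t in (0:ℝ)..1, B t = ((∫ t in (0:ℝ)..1, (u + t)⁻¹ : ℝ) : ℂ) :=
      intervalIntegral.integral_ofReal
    have hderiv : ∀ t ∈ Set.uIcc (0:ℝ) 1, HasDerivAt (fun t => Real.log (u + t)) ((u + t)⁻¹) t := by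
      intro t ht
      rw [hIcc] at ht
      have h2 : HasDerivAt (fun t : ℝ => u + t) 1 t := (hasDerivAt_id t).const_add u
      have h3 := h2.log (hbpos t ht.1).ne'
      simpa using h3
    have h4 := intervalIntegral.integral_eq_sub_of_hasDerivAt hderiv contBR.intervalIntegrable
    rw [h1, h4]
    norm_num
  -- pointwise bound for the difference
  have hbound : ∀ᵐ t ∂volume.restrict (Set.uIoc (0:ℝ) 1),
      ‖A t - B t‖ ≤ gK s * (u / (u + t)^2 + 1) := by
    have hne1 : ∀ᵐ t : ℝ ∂volume, t ≠ 1 := by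
      rw [MeasureTheory.ae_iff]
      have : {t : ℝ | ¬ t ≠ 1} = {1} := by ext t; simp
      rw [this]
      exact Real.volume_singleton
    filter_upwards [ae_restrict_mem measurableSet_uIoc, ae_restrict_of_ae hne1] with t ht htne
    rw [hIoc] at ht
    have ht0 : 0 < t := ht.1
    have ht1 : t < 1 := lt_of_le_of_ne ht.2 htne
    set b : ℝ := u + t with hbdef
    have hb : 0 < b := by simp [hbdef]; linarith
    set a : ℝ := t * (1 - t) with hadef
    have ha : 0 < a := mul_pos ht0 (by linarith)
    set r : ℝ := a / b with hrdef
    have hrpos : 0 < r := div_pos ha hb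
    have hab : a ≤ b := by simp [hadef, hbdef]; nlinarith
    have hrle : r ≤ 1 := (div_le_one hb).mpr hab
    -- identity: A t = (r:ℂ)^(s-1) * (↑b)⁻¹
    have hbC : ((b:ℝ):ℂ) ≠ 0 := by exact_mod_cast hb.ne'
    have e1 : (t:ℂ) * (1 - (t:ℂ)) = ((a : ℝ) : ℂ) := by push_cast [hadef]; ring
    have e2 : (u:ℂ) + (t:ℂ) = ((b : ℝ) : ℂ) := by push_cast [hbdef]; ring
    have e3 : a = r * b := by rw [hrdef, div_mul_cancel₀ a hb.ne']
    have e4 : ((a:ℝ):ℂ) ^ (s-1) = ((r:ℝ):ℂ) ^ (s-1) * ((b:ℝ):ℂ) ^ (s-1) := by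
      rw [e3, Complex.ofReal_mul, Complex.mul_cpow_ofReal_nonneg hrpos.le hb.le]
    have e5 : ((b:ℝ):ℂ) ^ (s-1) * ((b:ℝ):ℂ) ^ (-s) = (((b:ℝ):ℂ))⁻¹ := by
      rw [← Complex.cpow_add _ _ hbC]
      have : s - 1 + -s = (-1 : ℂ) := by ring
      rw [this, Complex.cpow_neg_one]
    have hAeq : A t = ((r:ℝ):ℂ) ^ (s-1) * (((b:ℝ):ℂ))⁻¹ := by
      simp only [A]
      rw [e1, e2, e4, mul_assoc, e5]
    have hBeq : B t = (((b:ℝ):ℂ))⁻¹ := by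
      simp only [B, hbdef]
      push_cast
      ring
    have hsub : A t - B t = (((b:ℝ):ℂ))⁻¹ * (((r:ℝ):ℂ) ^ (s-1) - 1) := by
      rw [hAeq, hBeq]; ring
    rw [hsub]
    rw [norm_mul, norm_inv, Complex.norm_real, Real.norm_of_nonneg hb.le]
    have hkey : ‖((r:ℝ):ℂ) ^ (s-1) - 1‖ ≤ gK s * (1 - r) := key_ineq s hs.le hrpos hrle
    have e6 : 1 - r = (u + t^2) / b := by
      rw [hrdef, hadef, hbdef]; field_simp; ring
    have ht2b : t^2 ≤ b^2 := by nlinarith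
    calc b⁻¹ * ‖((r:ℝ):ℂ) ^ (s-1) - 1‖ ≤ b⁻¹ * (gK s * (1 - r)) := by
          apply mul_le_mul_of_nonneg_left hkey (by positivity)
      _ = gK s * ((u + t^2) / b^2) := by
          rw [e6]; field_simp
      _ ≤ gK s * (u / (u + t)^2 + 1) := by
          apply mul_le_mul_of_nonneg_left _ hK.le
          rw [← hbdef]
          rw [add_div]
          have : t^2 / b^2 ≤ 1 := by
            rw [div_le_one (by positivity)]
            exact ht2b
          linarith
  -- integral of the dominating function
  have hMderiv : ∀ t ∈ Set.uIcc (0:ℝ) 1,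
      HasDerivAt (fun t : ℝ => gK s * (-(u * (u + t)⁻¹) + t)) (gK s * (u / (u + t)^2 + 1)) t := by
    intro t ht
    rw [hIcc] at ht
    have hb : 0 < u + t := hbpos t ht.1
    have h1 : HasDerivAt (fun t : ℝ => u + t) 1 t := (hasDerivAt_id t).const_add u
    have h2 : HasDerivAt (fun t : ℝ => (u + t)⁻¹) (-1 / (u + t)^2) t := by
      exact h1.inv hb.ne'
    have h3 : HasDerivAt (fun t : ℝ => -(u * (u + t)⁻¹) + t) (-(u * (-1 / (u + t)^2)) + 1) t :=
      ((h2.const_mul u).neg).add (hasDerivAt_id t)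
    have h4 := h3.const_mul (gK s)
    exact h4.congr_deriv (by ring)
  have contM : ContinuousOn (fun t : ℝ => gK s * (u / (u + t)^2 + 1)) (Set.uIcc 0 1) := by
    apply ContinuousOn.mul continuousOn_const
    apply ContinuousOn.add _ continuousOn_const
    apply ContinuousOn.div continuousOn_const
    · exact ((continuous_const.add continuous_id).pow 2).continuousOn
    · intro t ht
      rw [hIcc] at ht
      have := hbpos t ht.1
      positivity
  have intM : IntervalIntegrable (fun t : ℝ => gK s * (u / (u + t)^2 + 1)) volume 0 1 :=
    contM.intervalIntegrable
  have hintM : ∫ t in (0:ℝ)..1, gK s * (u / (u + t)^2 + 1)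
      = gK s * (2 - u / (u + 1)) := by
    rw [intervalIntegral.integral_eq_sub_of_hasDerivAt hMderiv intM]
    have hu0 : u ≠ 0 := hu.ne'
    field_simp
    ring
  -- bound on the difference integral
  have hdiff : ‖∫ t in (0:ℝ)..1, (A t - B t)‖ ≤ 2 * gK s := by
    have h1 := intervalIntegral.norm_integral_le_abs_of_norm_le hbound intM
    rw [hintM] at h1
    have huu : 0 ≤ u / (u + 1) := by positivity
    have huu1 : u / (u + 1) ≤ 1 := by
      rw [div_le_one (by linarith)]; linarith
    have habs : |gK s * (2 - u / (u + 1))| = gK s * (2 - u / (u + 1)) := by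
      apply abs_of_nonneg; nlinarith
    rw [habs] at h1
    calc ‖∫ t in (0:ℝ)..1, (A t - B t)‖ = ‖∫ t in (0:ℝ)..1, (A t - B t)‖ := rfl
      _ ≤ gK s * (2 - u / (u + 1)) := h1
      _ ≤ 2 * gK s := by nlinarith
  -- combine everything
  have split : freeGreen s u = (∫ t in (0:ℝ)..1, (A t - B t)) + ∫ t in (0:ℝ)..1, B t := by
    rw [← intervalIntegral.integral_add (intA.sub intB) intB]
    simp only [sub_add_cancel]
    rfl
  have final : freeGreen s u + (Real.log u : ℂ)
      = (∫ t in (0:ℝ)..1, (A t - B t)) + ((Real.log (u+1) : ℝ) : ℂ) := by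
    rw [split, hintB]
    push_cast
    ring
  rw [final]
  have hlog1 : (0:ℝ) ≤ Real.log (u + 1) := Real.log_nonneg (by linarith)
  have hlog2 : Real.log (u + 1) ≤ Real.log 2 := Real.log_le_log (by linarith) (by linarith)
  calc ‖(∫ t in (0:ℝ)..1, (A t - B t)) + ((Real.log (u+1) : ℝ) : ℂ)‖
      ≤ ‖∫ t in (0:ℝ)..1, (A t - B t)‖ + ‖((Real.log (u+1) : ℝ) : ℂ)‖ :=
        norm_add_le _ _
    _ ≤ 2 * gK s + Real.log 2 := by
        rw [Complex.norm_real, Real.norm_eq_abs, abs_of_nonneg hlog1]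
        linarith [hdiff]
end
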